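/- Let R be a commutative ring with identity and let n ≥ 2. Then diam(APOḠ(M_n(R))) ≥ diam(AG(R)), where AG(R) is the annihilating-ideal graph of R. -/

import Mathlib

/-!
`I ↦ Mₙ(I)` maps the vertices of `AG(R)` injectively to vertices of `APOḠ(Mₙ(R))`, and testing on
matrix units shows that `Mₙ(I)` annihilates `Mₙ(J)` on either side only if `IJ = 0`; so distances
`0` and `1` are reflected. If `Mₙ(I)` and `Mₙ(J)` have a common neighbour `A`, the ideal generated
by the entries of the elements of `A` is annihilated by both `I` and `J`, so distance `2` is
reflected too. Larger distances need nothing more, since `diam AG(R) ≤ 3` (Behboodi–Rakeei): two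
vertices `I`, `J` with annihilators `I'`, `J'` are joined by `I — I'J' — J` or `I — I' — J' — J`.
-/

open scoped Pointwise

/-- `I` is a left ideal of the ring `R`: an additive subgroup with `R·I ⊆ I`. -/
def IsLeftIdeal (R : Type*) [Ring R] (I : AddSubgroup R) : Prop :=
  ∀ r : R, ∀ x ∈ I, r * x ∈ I

/-- `I` is a right ideal of the ring `R`: an additive subgroup with `I·R ⊆ I`. -/
def IsRightIdeal (R : Type*) [Ring R] (I : AddSubgroup R) : Prop :=
  ∀ r : R, ∀ x ∈ I, x * r ∈ I

/-- `I` is a one-sided (left or right) ideal of `R`. -/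
def IsOneSidedIdeal (R : Type*) [Ring R] (I : AddSubgroup R) : Prop :=
  IsLeftIdeal R I ∨ IsRightIdeal R I

/-- `IPO(R)`: the set of all products `I*J` of two one-sided ideals of `R`.
Here `I * J` is the additive subgroup generated by `{a*b : a ∈ I, b ∈ J}`
(the pointwise product of additive subgroups). -/
def IPO (R : Type*) [Ring R] : Set (AddSubgroup R) :=
  {A | ∃ I J : AddSubgroup R, IsOneSidedIdeal R I ∧ IsOneSidedIdeal R J ∧ A = I * J}

/-- `A` is a vertex of `APOG(R) = Γ(IPO(R))`: a nonzero element of `IPO(R)` that is a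
one-sided zero-divisor of the semigroup `IPO(R)`. -/
def APOGVertex (R : Type*) [Ring R] (A : AddSubgroup R) : Prop :=
  A ∈ IPO R ∧ A ≠ ⊥ ∧ ∃ B ∈ IPO R, B ≠ ⊥ ∧ (A * B = ⊥ ∨ B * A = ⊥)

/-- The directed edge `A → B` of `APOG(R)`: both are vertices, `A ≠ B` and `A*B = 0`. -/
def APOGEdge (R : Type*) [Ring R] (A B : AddSubgroup R) : Prop :=
  APOGVertex R A ∧ APOGVertex R B ∧ A ≠ B ∧ A * B = ⊥

/-- The undirected graph `APOḠ(R) = Γ̄(IPO(R))` on the vertex set of `APOG(R)`: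
distinct vertices `A, B` are adjacent iff `A*B = 0` or `B*A = 0`. -/
def apogGraph (R : Type*) [Ring R] : SimpleGraph {A : AddSubgroup R // APOGVertex R A} where
  Adj A B := A ≠ B ∧ ((A : AddSubgroup R) * B = ⊥ ∨ (B : AddSubgroup R) * A = ⊥)
  symm := ⟨by rintro A B ⟨hAB, h⟩; exact ⟨hAB.symm, h.symm⟩⟩
  loopless := ⟨by rintro A ⟨h, -⟩; exact h rfl⟩

/-- A vertex of the annihilating-ideal graph `AG(R)` of a commutative ring: a nonzero
ideal annihilated by some nonzero ideal. -/
def AGVertex (R : Type*) [CommRing R] (I : Ideal R) : Prop :=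
  I ≠ ⊥ ∧ ∃ J : Ideal R, J ≠ ⊥ ∧ I * J = ⊥

/-- The annihilating-ideal graph `AG(R)` of a commutative ring `R`. -/
def agGraph (R : Type*) [CommRing R] : SimpleGraph {I : Ideal R // AGVertex R I} where
  Adj I J := I ≠ J ∧ (I : Ideal R) * J = ⊥
  symm := ⟨by rintro I J ⟨hIJ, h⟩; exact ⟨hIJ.symm, by rwa [mul_comm]⟩⟩
  loopless := ⟨by rintro I ⟨h, -⟩; exact h rfl⟩

namespace AddSubgroup

variable {S : Type*} [Ring S]

theorem mul_mem_mul {A B : AddSubgroup S} {a b : S} (ha : a ∈ A) (hb : b ∈ B) : a * b ∈ A * B :=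
  AddSubmonoid.mul_mem_mul ha hb

theorem mul_le {A B C : AddSubgroup S} : A * B ≤ C ↔ ∀ a ∈ A, ∀ b ∈ B, a * b ∈ C :=
  AddSubmonoid.mul_le (M := A.toAddSubmonoid) (N := B.toAddSubmonoid) (P := C.toAddSubmonoid)

theorem mul_eq_bot_iff {A B : AddSubgroup S} : A * B = ⊥ ↔ ∀ a ∈ A, ∀ b ∈ B, a * b = 0 := by
  simp only [eq_bot_iff, mul_le, mem_bot]

theorem top_mul_of_isLeftIdeal {L : AddSubgroup S} (hL : IsLeftIdeal S L) : ⊤ * L = L :=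
  le_antisymm (mul_le.2 fun r _ x hx => hL r x hx)
    fun x hx => one_mul x ▸ mul_mem_mul (mem_top 1) hx

theorem mem_IPO_of_isLeftIdeal {L : AddSubgroup S} (hL : IsLeftIdeal S L) : L ∈ IPO S :=
  ⟨⊤, L, Or.inl fun _ _ _ => mem_top _, Or.inl hL, (top_mul_of_isLeftIdeal hL).symm⟩

end AddSubgroup

namespace Ideal

open Matrix

variable {R : Type*} [CommRing R] {ι : Type*} [Fintype ι] [DecidableEq ι]

theorem isLeftIdeal_matrix (I : Ideal R) :
    IsLeftIdeal (Matrix ι ι R) (I.matrix ι).toAddSubgroup :=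
  fun r _ hx => (I.matrix ι).smul_mem r hx

theorem matrix_mul_matrix_le (I J : Ideal R) :
    (I.matrix ι).toAddSubgroup * (J.matrix ι).toAddSubgroup ≤ ((I * J).matrix ι).toAddSubgroup :=
  AddSubgroup.mul_le.2 fun a ha b hb i j => by
    rw [mul_apply]
    exact (I * J).sum_mem fun k _ => mul_mem_mul (ha i k) (hb k j)

theorem matrix_mul_matrix_eq_bot {I J : Ideal R} (h : I * J = ⊥) :
    (I.matrix ι).toAddSubgroup * (J.matrix ι).toAddSubgroup = ⊥ := by
  simpa [h] using matrix_mul_matrix_le (ι := ι) I J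

theorem single_mem_matrix {I : Ideal R} {r : R} (hr : r ∈ I) (i j : ι) :
    single i j r ∈ (I.matrix ι).toAddSubgroup := by
  intro k l
  by_cases h : i = k ∧ j = l
  · simpa [single_apply, h] using hr
  · simp [h]

theorem mul_apply_eq_zero_of_matrix_annihilates {I : Ideal R}
    {A : AddSubgroup (Matrix ι ι R)}
    (h : (I.matrix ι).toAddSubgroup * A = ⊥ ∨ A * (I.matrix ι).toAddSubgroup = ⊥)
    {r : R} (hr : r ∈ I) {a : Matrix ι ι R} (ha : a ∈ A) (i j : ι) : r * a i j = 0 := by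
  rcases h with h | h
  · simpa using congr_fun₂ (AddSubgroup.mul_eq_bot_iff.1 h _ (single_mem_matrix hr i i) a ha) i j
  · simpa [mul_comm] using
      congr_fun₂ (AddSubgroup.mul_eq_bot_iff.1 h a ha _ (single_mem_matrix hr j j)) i j

variable [Nonempty ι]

theorem mul_eq_bot_of_matrix_annihilates {I J : Ideal R}
    (h : (I.matrix ι).toAddSubgroup * (J.matrix ι).toAddSubgroup = ⊥ ∨
      (J.matrix ι).toAddSubgroup * (I.matrix ι).toAddSubgroup = ⊥) : I * J = ⊥ := by
  inhabit ι
  refine eq_bot_iff.2 <| Submodule.mul_le.2 fun r hr s hs => ?_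
  simpa using I.mul_apply_eq_zero_of_matrix_annihilates h hr
    (single_mem_matrix hs default default) default default

variable (ι) in
theorem matrix_injective : Function.Injective (matrix (R := R) ι) := fun I J h => by
  ext r
  simpa only [mem_matrix, of_apply, forall_const] using Iff.of_eq congr(of (fun _ _ => r) ∈ $h)

theorem matrix_ne_bot {I : Ideal R} (hI : I ≠ ⊥) : (I.matrix ι).toAddSubgroup ≠ ⊥ := by
  rw [Ne, ← Submodule.bot_toAddSubgroup (R := Matrix ι ι R), Submodule.toAddSubgroup_inj,
    ← matrix_bot ι]
  exact (matrix_injective ι).ne hI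

end Ideal

section MatrixIdeals

open Matrix

variable {R : Type*} [CommRing R] {ι : Type*}

def entryIdeal (A : AddSubgroup (Matrix ι ι R)) : Ideal R :=
  Ideal.span {x | ∃ a ∈ A, ∃ i j, a i j = x}

theorem entryIdeal_ne_bot {A : AddSubgroup (Matrix ι ι R)} (hA : A ≠ ⊥) : entryIdeal A ≠ ⊥ := by
  contrapose! hA
  refine (AddSubgroup.eq_bot_iff_forall A).2 fun a ha => ?_
  ext i j
  have hij : a i j ∈ entryIdeal A := Ideal.subset_span ⟨a, ha, i, j, rfl⟩
  rwa [hA, Ideal.mem_bot] at hij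

variable [Fintype ι] [DecidableEq ι]

theorem Ideal.mul_entryIdeal_eq_bot {I : Ideal R} {A : AddSubgroup (Matrix ι ι R)}
    (h : (I.matrix ι).toAddSubgroup * A = ⊥ ∨ A * (I.matrix ι).toAddSubgroup = ⊥) :
    I * entryIdeal A = ⊥ := by
  refine eq_bot_iff.2 <| (Ideal.mul_mono_right ?_).trans (Submodule.mul_annihilator I).le
  refine Ideal.span_le.2 ?_
  rintro _ ⟨a, ha, i, j, rfl⟩
  exact Submodule.mem_annihilator.2 fun r hr => by
    rw [smul_eq_mul, mul_comm]; exact I.mul_apply_eq_zero_of_matrix_annihilates h hr ha i j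

variable [Nonempty ι]

theorem AGVertex.apogVertex_matrix {I : Ideal R} (hI : AGVertex R I) :
    APOGVertex (Matrix ι ι R) (I.matrix ι).toAddSubgroup := by
  obtain ⟨hI₀, J, hJ₀, hIJ⟩ := hI
  exact ⟨AddSubgroup.mem_IPO_of_isLeftIdeal I.isLeftIdeal_matrix, Ideal.matrix_ne_bot hI₀,
    _, AddSubgroup.mem_IPO_of_isLeftIdeal J.isLeftIdeal_matrix, Ideal.matrix_ne_bot hJ₀,
    Or.inl (Ideal.matrix_mul_matrix_eq_bot hIJ)⟩

variable (ι) in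
def matrixVertex (I : {I : Ideal R // AGVertex R I}) :
    {A : AddSubgroup (Matrix ι ι R) // APOGVertex (Matrix ι ι R) A} :=
  ⟨(I.1.matrix ι).toAddSubgroup, I.2.apogVertex_matrix⟩

theorem matrixVertex_injective :
    Function.Injective (matrixVertex (R := R) ι) := fun I J h => by
  have := congrArg Subtype.val h
  simp only [matrixVertex, Submodule.toAddSubgroup_inj] at this
  exact Subtype.ext (Ideal.matrix_injective ι this)

end MatrixIdeals

section AnnihilatingIdealGraph

variable {R : Type*} [CommRing R]

theorem agGraph_edist_le_one_of_mul_eq_bot {I J : {I : Ideal R // AGVertex R I}}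
    (h : I.1 * J.1 = ⊥) : (agGraph R).edist I J ≤ 1 := by
  rw [SimpleGraph.edist_le_one_iff_adj_or_eq]
  by_cases hIJ : I = J
  · exact Or.inr hIJ
  · exact Or.inl ⟨hIJ, h⟩

theorem agGraph_edist_le_two_of_mul_eq_bot {I J : {I : Ideal R // AGVertex R I}} {X : Ideal R}
    (hX : X ≠ ⊥) (hIX : I.1 * X = ⊥) (hXJ : X * J.1 = ⊥) : (agGraph R).edist I J ≤ 2 := by
  let x : {I : Ideal R // AGVertex R I} := ⟨X, hX, I, I.2.1, by rwa [mul_comm]⟩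
  calc (agGraph R).edist I J ≤ (agGraph R).edist I x + (agGraph R).edist x J :=
        SimpleGraph.edist_triangle
    _ ≤ 1 + 1 :=
      add_le_add (agGraph_edist_le_one_of_mul_eq_bot hIX) (agGraph_edist_le_one_of_mul_eq_bot hXJ)
    _ = 2 := by norm_num

theorem agGraph_edist_le_three (I J : {I : Ideal R // AGVertex R I}) :
    (agGraph R).edist I J ≤ 3 := by
  obtain ⟨I', hI', hII'⟩ := I.2.2
  obtain ⟨J', hJ', hJJ'⟩ := J.2.2
  rw [mul_comm] at hJJ'
  by_cases h : I' * J' = ⊥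
  · let x : {I : Ideal R // AGVertex R I} := ⟨I', hI', I.1, I.2.1, by rwa [mul_comm]⟩
    calc (agGraph R).edist I J ≤ (agGraph R).edist I x + (agGraph R).edist x J :=
          SimpleGraph.edist_triangle
      _ ≤ 1 + 2 := add_le_add (agGraph_edist_le_one_of_mul_eq_bot (J := x) hII')
          (agGraph_edist_le_two_of_mul_eq_bot (I := x) hJ' h hJJ')
      _ = 3 := by norm_num
  · refine (agGraph_edist_le_two_of_mul_eq_bot h ?_ ?_).trans (by norm_num)
    · rw [← mul_assoc, hII', Ideal.bot_mul]
    · rw [mul_assoc, hJJ', Ideal.mul_bot]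

end AnnihilatingIdealGraph

theorem agGraph_edist_le_apogGraph_edist {R : Type*} [CommRing R] {ι : Type*} [Fintype ι]
    [DecidableEq ι] [Nonempty ι] (I J : {I : Ideal R // AGVertex R I}) :
    (agGraph R).edist I J ≤
      (apogGraph (Matrix ι ι R)).edist (matrixVertex ι I) (matrixVertex ι J) := by
  set G := apogGraph (Matrix ι ι R)
  by_cases hIJ : I = J
  · simp [hIJ]
  have hne : matrixVertex ι I ≠ matrixVertex ι J := matrixVertex_injective.ne hIJ
  by_cases hadj : G.Adj (matrixVertex ι I) (matrixVertex ι J)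
  · rw [G.edist_eq_one_iff_adj.2 hadj]
    exact agGraph_edist_le_one_of_mul_eq_bot (Ideal.mul_eq_bot_of_matrix_annihilates hadj.2)
  obtain ⟨⟨A, hA⟩, hAI, hAJ⟩ | hempty :=
    (G.commonNeighbors (matrixVertex ι I) (matrixVertex ι J)).eq_empty_or_nonempty.symm
  · rw [G.edist_eq_two_iff.2 ⟨hne, hadj, _, hAI, hAJ⟩]
    exact agGraph_edist_le_two_of_mul_eq_bot (entryIdeal_ne_bot hA.2.1)
      (Ideal.mul_entryIdeal_eq_bot hAI.2)
      ((mul_comm _ _).trans (Ideal.mul_entryIdeal_eq_bot hAJ.2))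
  · have h₂ : 2 < G.edist (matrixVertex ι I) (matrixVertex ι J) :=
      G.two_lt_edist_iff.2 ⟨hne, hadj, hempty⟩
    calc (agGraph R).edist I J ≤ 3 := agGraph_edist_le_three I J
      _ = 2 + 1 := by norm_num
      _ ≤ _ := Order.add_one_le_of_lt h₂

/-- For a commutative ring `R` and `n ≥ 2`,
`diam(APOḠ(Mₙ(R))) ≥ diam(AG(R))`. -/
theorem matrix_apog_diam_ge_ag_diam (R : Type*) [CommRing R] (n : ℕ) (hn : 2 ≤ n) :
    (agGraph R).ediam ≤ (apogGraph (Matrix (Fin n) (Fin n) R)).ediam := by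
  have : Nonempty (Fin n) := Fin.pos_iff_nonempty.1 (by omega)
  exact SimpleGraph.ediam_le_of_edist_le fun I J =>
    (agGraph_edist_le_apogGraph_edist I J).trans SimpleGraph.edist_le_ediam
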